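/- Define, for (x,y) in D = {(x,y) : 0 ≤ x ≤ y ≤ 1, x+y ≥ 1}, δ(x,y) = 2y(x+y)/(4y+x-1) and θ(x,y) = 3(x+y)(1-x)/(2y) if x ≤ 1/3; θ(x,y) = 2(x+y)/(y(1+3x)) if x ≥ 1/3 and y ≥ 2/3; θ(x,y) = (x+y)(4(1-x)(1-y)-xy)/(2(x(1-x)+y(1-y)-xy)) if y < 2/3. Then δ(x,y)·θ(x,y) ≥ 1 for all (x,y) ∈ D. -/

import Mathlib

noncomputable def quadPackDensity (x y : ℝ) : ℝ := 2*y*(x+y)/(4*y+x-1)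

noncomputable def quadCoverDensity (x y : ℝ) : ℝ :=
  if x ≤ 1/3 then 3*(x+y)*(1-x)/(2*y)
  else if 2/3 ≤ y then 2*(x+y)/(y*(1+3*x))
  else (x+y)*(4*(1-x)*(1-y)-x*y)/(2*(x*(1-x)+y*(1-y)-x*y))

/-!
On each of the three pieces of `quadCoverDensity`, clearing denominators turns `1 ≤ δ θ` into
the nonnegativity of a polynomial. On the second piece it is the square `y (x - 2y + 1)²`. On the
other two it vanishes on the line `x + y = 1`, and after dividing out `x + y - 1` the cofactor is
visibly nonnegative on the first piece. On the third piece (`y < 2/3`) the cofactor is a concave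
quadratic in `s = x + y` on the interval `1 ≤ s ≤ 2y`, hence bounded below by the chord through
its (nonnegative) values at the endpoints.
-/

section QuadDensities

variable {x y : ℝ}

theorem one_le_quadPackDensity_mul_quadCoverDensity_of_le_one_third
    (hx : x ≤ 1/3) (hsum : 1 ≤ x + y) :
    1 ≤ quadPackDensity x y * quadCoverDensity x y := by
  rw [quadPackDensity, quadCoverDensity, if_pos hx, div_mul_div_comm,
    one_le_div (mul_pos (by linarith) (by linarith)), ← sub_nonneg]
  have key : 2*y*(x+y)*(3*(x+y)*(1-x)) - (4*y+x-1)*(2*y)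
      = 2*y*(x+y-1)*((x+y+1)*(1-3*x) + 2*(x+y-1)) := by ring
  rw [key]
  exact mul_nonneg (mul_nonneg (by linarith) (by linarith))
    (add_nonneg (mul_nonneg (by linarith) (by linarith)) (by linarith))

theorem one_le_quadPackDensity_mul_quadCoverDensity_of_one_third_lt_of_two_thirds_le
    (hx : 1/3 < x) (hy : 2/3 ≤ y) :
    1 ≤ quadPackDensity x y * quadCoverDensity x y := by
  rw [quadPackDensity, quadCoverDensity, if_neg hx.not_ge, if_pos hy, div_mul_div_comm,
    one_le_div (mul_pos (by linarith) (mul_pos (by linarith) (by linarith))), ← sub_nonneg]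
  have key : 2*y*(x+y)*(2*(x+y)) - (4*y+x-1)*(y*(1+3*x)) = y*(x-2*y+1)^2 := by ring
  rw [key]
  exact mul_nonneg (by linarith) (sq_nonneg _)

theorem one_le_quadPackDensity_mul_quadCoverDensity_of_one_third_lt_of_lt_two_thirds
    (hx : 1/3 < x) (hxy : x ≤ y) (hy : y < 2/3) (hsum : 1 ≤ x + y) :
    1 ≤ quadPackDensity x y * quadCoverDensity x y := by
  have hden : 0 < x*(1-x)+y*(1-y)-x*y := by
    have split : x*(1-x)+y*(1-y)-x*y = (y-x)*(x+y-1) + y*(2-x-2*y) := by ring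
    rw [split]
    exact add_pos_of_nonneg_of_pos (mul_nonneg (by linarith) (by linarith))
      (mul_pos (by linarith) (by linarith))
  rw [quadPackDensity, quadCoverDensity, if_neg hx.not_ge, if_neg hy.not_ge, div_mul_div_comm,
    one_le_div (mul_pos (by linarith) (by linarith)), ← sub_nonneg]
  have key : 2*y*(x+y)*((x+y)*(4*(1-x)*(1-y)-x*y)) - (4*y+x-1)*(2*(x*(1-x)+y*(1-y)-x*y))
      = 2*(x+y-1)*(y*(2-3*y)*((2*y-1)*(1-y) + y*(y-x)) + (1-y)*(3*y-1)*(x+y-1)*(y-x)) := by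
    ring
  rw [key]
  have h2y : 0 ≤ 2*y-1 := by linarith
  have chord : 0 ≤ y*(2-3*y)*((2*y-1)*(1-y) + y*(y-x)) :=
    mul_nonneg (mul_nonneg (by linarith) (by linarith))
      (add_nonneg (mul_nonneg h2y (by linarith)) (mul_nonneg (by linarith) (by linarith)))
  have bulge : 0 ≤ (1-y)*(3*y-1)*(x+y-1)*(y-x) :=
    mul_nonneg (mul_nonneg (mul_nonneg (by linarith) (by linarith)) (by linarith)) (by linarith)
  exact mul_nonneg (by linarith) (add_nonneg chord bulge)

end QuadDensities

theorem stmt_18 (x y : ℝ) (hxy : x ≤ y) (hsum : 1 ≤ x + y) :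
    quadPackDensity x y * quadCoverDensity x y ≥ 1 := by
  rcases le_or_gt x (1/3) with hx | hx
  · exact one_le_quadPackDensity_mul_quadCoverDensity_of_le_one_third hx hsum
  rcases le_or_gt (2/3) y with hy | hy
  · exact one_le_quadPackDensity_mul_quadCoverDensity_of_one_third_lt_of_two_thirds_le hx hy
  · exact one_le_quadPackDensity_mul_quadCoverDensity_of_one_third_lt_of_lt_two_thirds
      hx hxy hy hsum
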